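/- Assume ε = +1 (non-twisted heterodimensional cycle). Then the maximal invariant set satisfies Λ = {P} ∪ {Q} ∪ O(γ) ∪ O(a). Consequently, the only f-invariant ergodic Borel probability measures μ on ℝ³ with μ(W) = 1 are the Dirac measures δ_P and δ_Q; in particular, no measure t δ_P + (1−t) δ_Q with t ∈ (0,1) is a weak* limit (i.e., a limit against all bounded continuous functions) of f-invariant ergodic Borel probability measures giving full measure to W. -/

import Mathlib

open MeasureTheory Filter

/-- Three-dimensional Euclidean space `ℝ³`, written as `ℝ × ℝ × ℝ`. -/
abbrev E3 : Type := ℝ × ℝ × ℝ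

/-- The point `P = (0,0,0)`. -/
def Ppt : E3 := (0, 0, 0)

/-- The open cube `c + (−1−2δ, 1+2δ)³` around a point `c`. -/
def bigCube (c : E3) (δ : ℝ) : Set E3 :=
  {v | |v.1 - c.1| < 1 + 2 * δ ∧ |v.2.1 - c.2.1| < 1 + 2 * δ ∧ |v.2.2 - c.2.2| < 1 + 2 * δ}

/-- The box `Δ_P = {P + (1+x, y, z) : x, y, z ∈ [−δ, δ]}`. -/
def DeltaP (δ : ℝ) : Set E3 :=
  {v | v.1 ∈ Set.Icc (1 - δ) (1 + δ) ∧ v.2.1 ∈ Set.Icc (-δ) δ ∧ v.2.2 ∈ Set.Icc (-δ) δ}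

/-- The box `Δ_Q = {Q + (x, y, −1+z) : x, y, z ∈ [−δ, δ]}`. -/
def DeltaQ (Q : E3) (δ : ℝ) : Set E3 :=
  {v | v.1 - Q.1 ∈ Set.Icc (-δ) δ ∧ v.2.1 - Q.2.1 ∈ Set.Icc (-δ) δ ∧
    v.2.2 - Q.2.2 ∈ Set.Icc (-1 - δ) (-1 + δ)}

/-- The cycle neighborhood
`W = U_P ∪ U_Q ∪ ⋃_{i=1}^{n−1} f^i(Δ_P) ∪ ⋃_{j=1}^{m−1} f^j(Δ_Q)`. -/
def cycleNbhd (f : Equiv.Perm E3) (Q : E3) (n m : ℕ) (δ : ℝ) : Set E3 :=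
  bigCube Ppt δ ∪ bigCube Q δ ∪
    (⋃ i ∈ Finset.Ico 1 n, (f ^ i) '' DeltaP δ) ∪
    (⋃ j ∈ Finset.Ico 1 m, (f ^ j) '' DeltaQ Q δ)

/-- The maximal invariant set `Λ = ⋂_{k ∈ ℤ} f^k(W)`. -/
def maxInvSet (f : Equiv.Perm E3) (Q : E3) (n m : ℕ) (δ : ℝ) : Set E3 :=
  ⋂ k : ℤ, (f ^ k) '' cycleNbhd f Q n m δ

/-- The segment `γ = {P + (s, 0, 0) : s ∈ [1−δ, 1+δ]}`. -/
def gammaSeg (δ : ℝ) : Set E3 :=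
  {v | v.1 ∈ Set.Icc (1 - δ) (1 + δ) ∧ v.2.1 = 0 ∧ v.2.2 = 0}

/-- The point `a = Q + (0, 0, −1)`. -/
def aPt (Q : E3) : E3 := (Q.1, Q.2.1, Q.2.2 - 1)

/-- The full orbit `O(A) = ⋃_{k ∈ ℤ} f^k(A)` of a set `A`. -/
def fullOrbit (f : Equiv.Perm E3) (A : Set E3) : Set E3 :=
  ⋃ k : ℤ, (f ^ k) '' A

/-!
Near `P` and `Q` the map is diagonal, so an orbit staying in `W` is governed by its itinerary:
inside `U_P` (resp. `U_Q`) its offsets from the saddle are multiplied by `(2, 1/4, 4)`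
(resp. `(1/2, 1/4, 4)`), it can leave only through `Δ_P` (resp. `Δ_Q`), and `n` (resp. `m`) steps
later it is in the other cube. An orbit that never leaves a cube has zero offset in the expanding
directions.

A point of `Λ ∩ Δ_Q` has `x ≤ Q.1`: either its backward orbit stays in `U_Q`, or it came from
`f^n Δ_P`, which lies in `x < Q.1`. Since `ε = +1`, `f^m` takes it to a point near `P` with
`x ≤ 0`, which `x ↦ 2x` never brings to `Δ_P`; so its forward orbit stays in `U_P` as well, and
the point is `a`. A point of `Λ ∩ Δ_P` lies on `γ`, since otherwise its orbit would meet `Δ_Q`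
at a point other than `a`. Hence `Λ = {P} ∪ {Q} ∪ O(γ) ∪ O(a)`.

No point of `γ` or of `{a}` ever returns to it, so by Poincaré recurrence these sets, and their
orbits, are null for every invariant probability measure. An ergodic measure carried by `Λ`
therefore lives on the fixed points `P`, `Q` and is a Dirac mass, and testing against a continuous
function separating `P` from `Q` rules out `t δ_P + (1 - t) δ_Q` as a limit.
-/

open Function Set Equiv

section Itinerary

variable {α : Type*} {g L : α → α} {U V E : Set α} {u : α}

theorem iterate_eq_of_forall_le_mem (hL : ∀ v ∈ U, g v ∈ U → g v = L v) {k : ℕ}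
    (hu : ∀ j ≤ k, g^[j] u ∈ U) : g^[k] u = L^[k] u := by
  induction k with
  | zero => rfl
  | succ k ih =>
    have hsucc := hu (k + 1) le_rfl
    rw [iterate_succ_apply'] at hsucc ⊢
    rw [iterate_succ_apply', ← ih fun j hj => hu j (by omega)]
    exact hL _ (hu k (by omega)) hsucc

theorem forall_iterate_mem_or_exists_exit (hu : u ∈ U)
    (hstep : ∀ v ∈ U, g v ∈ V → g v ∈ U ∨ v ∈ E) (hV : ∀ k, g^[k] u ∈ V) :
    (∀ k, g^[k] u ∈ U) ∨ ∃ k, (∀ j ≤ k, g^[j] u ∈ U) ∧ g^[k] u ∈ E := by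
  classical
  by_cases hstay : ∀ k, g^[k] u ∈ U
  · exact Or.inl hstay
  push Not at hstay
  obtain ⟨k, hk⟩ : ∃ k, Nat.find hstay = k + 1 :=
    Nat.exists_eq_succ_of_ne_zero fun h => by
      have h0 := Nat.find_spec hstay
      rw [h] at h0
      exact h0 hu
  have hmin : ∀ j ≤ k, g^[j] u ∈ U := fun j hj => not_not.1 (Nat.find_min hstay (by omega))
  have hexit := Nat.find_spec hstay
  rw [hk, iterate_succ_apply'] at hexit
  have hnext := hV (k + 1)
  rw [iterate_succ_apply'] at hnext
  exact Or.inr ⟨k, hmin, (hstep _ (hmin k le_rfl) hnext).resolve_left hexit⟩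

theorem forall_iterate_mem_or_exists_exit_eq (hu : u ∈ U)
    (hL : ∀ v ∈ U, g v ∈ U → g v = L v) (hstep : ∀ v ∈ U, g v ∈ V → g v ∈ U ∨ v ∈ E)
    (hV : ∀ k, g^[k] u ∈ V) :
    (∀ k, L^[k] u ∈ U) ∨ ∃ k, g^[k] u ∈ E ∧ g^[k] u = L^[k] u := by
  rcases forall_iterate_mem_or_exists_exit hu hstep hV with hstay | ⟨k, hle, hk⟩
  · exact Or.inl fun k => iterate_eq_of_forall_le_mem hL (fun j _ => hstay j) ▸ hstay k
  · exact Or.inr ⟨k, hk, iterate_eq_of_forall_le_mem hL hle⟩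

end Itinerary

section Perm

variable {α : Type*} {f : Perm α} {L L' : α → α} {U B S : Set α}

theorem inv_apply_eq_of_eqOn (hL : EqOn f L U) (hL' : LeftInverse L' L) {v : α}
    (hv : f⁻¹ v ∈ U) : f⁻¹ v = L' v := by
  rw [← hL' (f⁻¹ v), ← hL hv, Perm.coe_inv, apply_symm_apply]

theorem mapsTo_inv_of_eqOn (hL : EqOn f L U) (hBU : B ⊆ U) (hL' : MapsTo L' B B)
    (hinv : ∀ v ∈ B, L (L' v) = v) : MapsTo ⇑f⁻¹ B B := fun v hv => by
  have hfv : f (L' v) = v := (hL (hBU (hL' hv))).trans (hinv v hv)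
  rw [← hfv, Perm.coe_inv, symm_apply_apply]
  exact hL' hv

theorem pow_apply_mem_of_le {N k : ℕ} (hS : MapsTo f S S) {s : α} (hs : (f ^ N) s ∈ S)
    (hk : N ≤ k) : (f ^ k) s ∈ S := by
  rw [← Nat.sub_add_cancel hk, pow_add, Perm.mul_apply]
  exact hS.perm_pow _ hs

theorem mem_zpow_image_iff {W : Set α} {u : α} {k : ℤ} : u ∈ (f ^ k) '' W ↔ (f ^ (-k)) u ∈ W := by
  simp only [image_eq_preimage_symm, mem_preimage, zpow_neg, Perm.coe_inv]

theorem zpow_apply_zpow_apply (j k : ℤ) (u : α) : (f ^ k) ((f ^ j) u) = (f ^ (k + j)) u := by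
  rw [zpow_add, Perm.mul_apply]

theorem zpow_natCast_apply (k : ℕ) (u : α) : (f ^ (k : ℤ)) u = (f ^ k) u := by
  rw [zpow_natCast]

theorem zpow_neg_natCast_apply (k : ℕ) (u : α) : (f ^ (-(k : ℤ))) u = (f⁻¹ ^ k) u := by
  rw [zpow_neg, zpow_natCast, inv_pow]

theorem mem_iInter_zpow_image_iff {W : Set α} {u : α} :
    u ∈ ⋂ k : ℤ, (f ^ k) '' W ↔ ∀ k : ℤ, (f ^ k) u ∈ W := by
  simp only [mem_iInter, mem_zpow_image_iff]
  exact ⟨fun h k => neg_neg k ▸ h (-k), fun h k => h (-k)⟩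

theorem mem_iUnion_zpow_image_iff {A : Set α} {u : α} :
    u ∈ ⋃ k : ℤ, (f ^ k) '' A ↔ ∃ k : ℤ, (f ^ k) u ∈ A := by
  simp only [mem_iUnion, mem_zpow_image_iff]
  exact ⟨fun ⟨k, hk⟩ => ⟨-k, hk⟩, fun ⟨k, hk⟩ => ⟨-k, by rwa [neg_neg]⟩⟩

theorem zpow_apply_mem_iInter_zpow_image_iff {W : Set α} {u : α} (j : ℤ) :
    (f ^ j) u ∈ ⋂ k : ℤ, (f ^ k) '' W ↔ u ∈ ⋂ k : ℤ, (f ^ k) '' W := by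
  simp only [mem_iInter_zpow_image_iff, zpow_apply_zpow_apply]
  exact ⟨fun h k => sub_add_cancel k j ▸ h (k - j), fun h k => h (k + j)⟩

theorem zpow_apply_mem_iUnion_zpow_image_iff {A : Set α} {u : α} (j : ℤ) :
    (f ^ j) u ∈ ⋃ k : ℤ, (f ^ k) '' A ↔ u ∈ ⋃ k : ℤ, (f ^ k) '' A := by
  simp only [mem_iUnion_zpow_image_iff, zpow_apply_zpow_apply]
  exact ⟨fun ⟨k, hk⟩ => ⟨k + j, hk⟩, fun ⟨k, hk⟩ => ⟨k - j, by rwa [sub_add_cancel]⟩⟩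

theorem pow_apply_mem_iff_of_zpow {X : Set α} (hX : ∀ (j : ℤ) u, (f ^ j) u ∈ X ↔ u ∈ X)
    (k : ℕ) (u : α) : (f ^ k) u ∈ X ↔ u ∈ X := by
  rw [← zpow_natCast_apply]; exact hX k u

theorem inv_pow_apply_mem_iff_of_zpow {X : Set α} (hX : ∀ (j : ℤ) u, (f ^ j) u ∈ X ↔ u ∈ X)
    (k : ℕ) (u : α) : (f⁻¹ ^ k) u ∈ X ↔ u ∈ X := by
  rw [← zpow_neg_natCast_apply]; exact hX _ u

end Perm

section DiagAffine

variable {c u : E3} {a b d a' b' d' δ r₁ r₂ r₃ : ℝ}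

def diagAffine (c : E3) (a b d : ℝ) (v : E3) : E3 :=
  (c.1 + a * (v.1 - c.1), c.2.1 + b * (v.2.1 - c.2.1), c.2.2 + d * (v.2.2 - c.2.2))

theorem diagAffine_diagAffine (v : E3) :
    diagAffine c a b d (diagAffine c a' b' d' v) = diagAffine c (a * a') (b * b') (d * d') v := by
  simp only [diagAffine, add_sub_cancel_left, mul_assoc]

theorem diagAffine_diagAffine_eq_self (ha : a * a' = 1) (hb : b * b' = 1) (hd : d * d' = 1)
    (v : E3) : diagAffine c a b d (diagAffine c a' b' d' v) = v := by
  rw [diagAffine_diagAffine, ha, hb, hd]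
  simp [diagAffine]

theorem diagAffine_self : diagAffine c a b d c = c := by
  simp [diagAffine]

theorem iterate_diagAffine (k : ℕ) :
    (diagAffine c a b d)^[k] = diagAffine c (a ^ k) (b ^ k) (d ^ k) := by
  induction k with
  | zero => funext v; simp [diagAffine]
  | succ k ih =>
    funext v
    rw [iterate_succ_apply', ih, diagAffine_diagAffine, pow_succ', pow_succ', pow_succ']

def closedBox (c : E3) (r₁ r₂ r₃ : ℝ) : Set E3 :=
  {v | |v.1 - c.1| ≤ r₁ ∧ |v.2.1 - c.2.1| ≤ r₂ ∧ |v.2.2 - c.2.2| ≤ r₃}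

theorem mapsTo_diagAffine_closedBox (h₁ : |a| * r₁ ≤ r₁) (h₂ : |b| * r₂ ≤ r₂)
    (h₃ : |d| * r₃ ≤ r₃) :
    MapsTo (diagAffine c a b d) (closedBox c r₁ r₂ r₃) (closedBox c r₁ r₂ r₃) := by
  have key : ∀ {s x r : ℝ}, |s| * r ≤ r → |x| ≤ r → |s * x| ≤ r := fun hs hx => by
    rw [abs_mul]; exact (mul_le_mul_of_nonneg_left hx (abs_nonneg _)).trans hs
  rintro v ⟨hv₁, hv₂, hv₃⟩
  simp only [closedBox, diagAffine, add_sub_cancel_left, mem_ofPred_eq]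
  exact ⟨key h₁ hv₁, key h₂ hv₂, key h₃ hv₃⟩

theorem closedBox_subset_bigCube (h₁ : r₁ < 1 + 2 * δ) (h₂ : r₂ < 1 + 2 * δ)
    (h₃ : r₃ < 1 + 2 * δ) : closedBox c r₁ r₂ r₃ ⊆ bigCube c δ :=
  fun _ ⟨hv₁, hv₂, hv₃⟩ => ⟨hv₁.trans_lt h₁, hv₂.trans_lt h₂, hv₃.trans_lt h₃⟩

theorem eq_zero_of_forall_abs_pow_mul_lt {r C : ℝ} (ha : 1 < a) (h : ∀ k : ℕ, |a ^ k * r| < C) :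
    r = 0 := by
  by_contra hr
  have hr' : 0 < |r| := abs_pos.2 hr
  obtain ⟨k, hk⟩ := pow_unbounded_of_one_lt (C / |r|) ha
  have hCk := h k
  rw [abs_mul, abs_of_pos (pow_pos (zero_lt_one.trans ha) k)] at hCk
  rw [div_lt_iff₀ hr'] at hk
  linarith

theorem eq_of_forall_iterate_diagAffine_mem_bigCube
    (h : ∀ k, (diagAffine c a b d)^[k] u ∈ bigCube c δ) :
    (1 < a → u.1 = c.1) ∧ (1 < b → u.2.1 = c.2.1) ∧ (1 < d → u.2.2 = c.2.2) := by
  simp only [iterate_diagAffine, bigCube, diagAffine, add_sub_cancel_left, mem_ofPred_eq] at h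
  refine ⟨fun ha => ?_, fun hb => ?_, fun hd => ?_⟩ <;> rw [← sub_eq_zero]
  exacts [eq_zero_of_forall_abs_pow_mul_lt ha fun k => (h k).1,
    eq_zero_of_forall_abs_pow_mul_lt hb fun k => (h k).2.1,
    eq_zero_of_forall_abs_pow_mul_lt hd fun k => (h k).2.2]

end DiagAffine

section CycleSkeleton

variable {α : Type*} {f : Perm α} {U₁ U₂ D₁ D₂ S : Set α} {n₁ n₂ : ℕ}

def cycleSet (f : Perm α) (U₁ U₂ D₁ D₂ : Set α) (n₁ n₂ : ℕ) : Set α :=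
  U₁ ∪ U₂ ∪ (⋃ i ∈ Finset.Ico 1 n₁, (f ^ i) '' D₁) ∪ (⋃ j ∈ Finset.Ico 1 n₂, (f ^ j) '' D₂)

theorem subset_cycleSet₁ : U₁ ⊆ cycleSet f U₁ U₂ D₁ D₂ n₁ n₂ :=
  fun _ h => Or.inl (Or.inl (Or.inl h))

theorem subset_cycleSet₂ : U₂ ⊆ cycleSet f U₁ U₂ D₁ D₂ n₁ n₂ :=
  fun _ h => Or.inl (Or.inl (Or.inr h))

theorem cycleSet_comm : cycleSet f U₂ U₁ D₂ D₁ n₂ n₁ = cycleSet f U₁ U₂ D₁ D₂ n₁ n₂ := by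
  ext v
  simp only [cycleSet, mem_union]
  tauto

/-- The combinatorics of a cycle between neighbourhoods `U₁`, `U₂` of two saddles: orbits starting
in `D₁ ⊆ U₁` (resp. `D₂ ⊆ U₂`) run outside `U₁ ∪ U₂` until they enter the other neighbourhood,
after exactly `n₁` (resp. `n₂`) steps. -/
structure CycleSkeleton (f : Perm α) (U₁ U₂ D₁ D₂ : Set α) (n₁ n₂ : ℕ) : Prop where
  disjoint : Disjoint U₁ U₂
  disjoint_image₁ : Disjoint (f '' U₁) U₂
  disjoint_image₂ : Disjoint (f '' U₂) U₁
  subset₁ : D₁ ⊆ U₁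
  subset₂ : D₂ ⊆ U₂
  mapsTo₁ : MapsTo ⇑(f ^ n₁) D₁ U₂
  mapsTo₂ : MapsTo ⇑(f ^ n₂) D₂ U₁
  transit₁ : ∀ w ∈ D₁, ∀ i ∈ Finset.Ico 1 n₁, (f ^ i) w ∉ U₁ ∪ U₂
  transit₂ : ∀ w ∈ D₂, ∀ j ∈ Finset.Ico 1 n₂, (f ^ j) w ∉ U₁ ∪ U₂

namespace CycleSkeleton

theorem symm (h : CycleSkeleton f U₁ U₂ D₁ D₂ n₁ n₂) : CycleSkeleton f U₂ U₁ D₂ D₁ n₂ n₁ where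
  disjoint := h.disjoint.symm
  disjoint_image₁ := h.disjoint_image₂
  disjoint_image₂ := h.disjoint_image₁
  subset₁ := h.subset₂
  subset₂ := h.subset₁
  mapsTo₁ := h.mapsTo₂
  mapsTo₂ := h.mapsTo₁
  transit₁ w hw j hj := union_comm U₁ U₂ ▸ h.transit₂ w hw j hj
  transit₂ w hw i hi := union_comm U₁ U₂ ▸ h.transit₁ w hw i hi

theorem eq_zero_of_pow_apply_mem₁ (h : CycleSkeleton f U₁ U₂ D₁ D₂ n₁ n₂) {w : α} (hw : w ∈ D₁)
    {i : ℕ} (hi : i < n₁) (hU : (f ^ i) w ∈ U₁ ∪ U₂) : i = 0 := by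
  by_contra hi0
  exact h.transit₁ w hw i (Finset.mem_Ico.2 ⟨Nat.one_le_iff_ne_zero.2 hi0, hi⟩) hU

theorem apply_mem_or_mem_exit (h : CycleSkeleton f U₁ U₂ D₁ D₂ n₁ n₂) {v : α} (hv : v ∈ U₁)
    (hfv : f v ∈ cycleSet f U₁ U₂ D₁ D₂ n₁ n₂) : f v ∈ U₁ ∨ v ∈ D₁ := by
  have hprev : ∀ {i w}, 1 ≤ i → (f ^ i) w = f v → (f ^ (i - 1)) w = v :=
    fun {i w} hi he => f.injective <| by
      rw [← he, ← Perm.mul_apply, ← pow_succ', Nat.sub_add_cancel hi]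
  rcases hfv with ((hU₁ | hU₂) | hT₁) | hT₂
  · exact Or.inl hU₁
  · exact absurd hU₂ (disjoint_left.1 h.disjoint_image₁ (mem_image_of_mem f hv))
  · obtain ⟨i, hi, w, hw, he⟩ := mem_iUnion₂.1 hT₁
    have hv' := hprev (Finset.mem_Ico.1 hi).1 he
    have hi0 := h.eq_zero_of_pow_apply_mem₁ hw (by have := Finset.mem_Ico.1 hi; omega)
      (hv' ▸ Or.inl hv)
    rw [hi0, pow_zero, Perm.one_apply] at hv'
    exact Or.inr (hv' ▸ hw)
  · obtain ⟨j, hj, w, hw, he⟩ := mem_iUnion₂.1 hT₂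
    have hv' := hprev (Finset.mem_Ico.1 hj).1 he
    have hj0 := h.symm.eq_zero_of_pow_apply_mem₁ hw (by have := Finset.mem_Ico.1 hj; omega)
      (hv' ▸ Or.inr hv)
    rw [hj0, pow_zero, Perm.one_apply] at hv'
    exact absurd (h.subset₂ (hv' ▸ hw)) (disjoint_left.1 h.disjoint hv)

theorem inv_apply_mem_or_mem_entry (h : CycleSkeleton f U₁ U₂ D₁ D₂ n₁ n₂) {v : α}
    (hv : v ∈ U₁) (hfv : f⁻¹ v ∈ cycleSet f U₁ U₂ D₁ D₂ n₁ n₂) :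
    f⁻¹ v ∈ U₁ ∨ v ∈ (f ^ n₂) '' D₂ := by
  have hnext : ∀ {i w}, (f ^ i) w = f⁻¹ v → (f ^ (i + 1)) w = v := fun {i w} he => by
    rw [pow_succ', Perm.mul_apply, he, Perm.coe_inv, apply_symm_apply]
  rcases hfv with ((hU₁ | hU₂) | hT₁) | hT₂
  · exact Or.inl hU₁
  · refine absurd hv (disjoint_left.1 h.disjoint_image₂ ⟨_, hU₂, ?_⟩)
    rw [Perm.coe_inv, apply_symm_apply]
  · obtain ⟨i, hi, w, hw, he⟩ := mem_iUnion₂.1 hT₁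
    have hv' := hnext he
    have hi' := (Finset.mem_Ico.1 hi).2
    rcases Nat.lt_or_ge (i + 1) n₁ with hlt | hge
    · exact absurd (h.eq_zero_of_pow_apply_mem₁ hw hlt (hv' ▸ Or.inl hv)) (Nat.succ_ne_zero i)
    · rw [show i + 1 = n₁ by omega] at hv'
      exact absurd (hv' ▸ h.mapsTo₁ hw) (disjoint_left.1 h.disjoint hv)
  · obtain ⟨j, hj, w, hw, he⟩ := mem_iUnion₂.1 hT₂
    have hv' := hnext he
    have hj' := (Finset.mem_Ico.1 hj).2
    rcases Nat.lt_or_ge (j + 1) n₂ with hlt | hge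
    · exact absurd (h.symm.eq_zero_of_pow_apply_mem₁ hw hlt (hv' ▸ Or.inr hv))
        (Nat.succ_ne_zero j)
    · rw [show j + 1 = n₂ by omega] at hv'
      exact Or.inr ⟨w, hw, hv'⟩

theorem forward_itinerary (h : CycleSkeleton f U₁ U₂ D₁ D₂ n₁ n₂) {L : α → α}
    (hL : EqOn f L U₁) {u : α} (hu : u ∈ U₁)
    (hW : ∀ k : ℕ, (f ^ k) u ∈ cycleSet f U₁ U₂ D₁ D₂ n₁ n₂) :
    (∀ k, L^[k] u ∈ U₁) ∨ ∃ k, (f ^ k) u ∈ D₁ ∧ (f ^ k) u = L^[k] u :=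
  forall_iterate_mem_or_exists_exit_eq hu (fun _ hv _ => hL hv)
    (fun _ hv => h.apply_mem_or_mem_exit hv) hW

theorem backward_itinerary (h : CycleSkeleton f U₁ U₂ D₁ D₂ n₁ n₂) {L' : α → α}
    (hL' : ∀ v, f⁻¹ v ∈ U₁ → f⁻¹ v = L' v) {u : α} (hu : u ∈ U₁)
    (hW : ∀ k : ℕ, (f⁻¹ ^ k) u ∈ cycleSet f U₁ U₂ D₁ D₂ n₁ n₂) :
    (∀ k, L'^[k] u ∈ U₁) ∨ ∃ k, (f⁻¹ ^ k) u ∈ (f ^ n₂) '' D₂ ∧ (f⁻¹ ^ k) u = L'^[k] u :=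
  forall_iterate_mem_or_exists_exit_eq hu (fun _ _ hv => hL' _ hv)
    (fun _ hv => h.inv_apply_mem_or_mem_entry hv) hW

theorem pow_apply_mem_cycleSet (h : CycleSkeleton f U₁ U₂ D₁ D₂ n₁ n₂) {s : α} (hs : s ∈ D₁)
    (hS : MapsTo f S S) (hSW : S ⊆ cycleSet f U₁ U₂ D₁ D₂ n₁ n₂) (hsS : (f ^ n₁) s ∈ S)
    (k : ℕ) : (f ^ k) s ∈ cycleSet f U₁ U₂ D₁ D₂ n₁ n₂ := by
  rcases Nat.lt_or_ge k n₁ with hk | hk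
  · rcases Nat.eq_zero_or_pos k with rfl | hk0
    · exact subset_cycleSet₁ (h.subset₁ hs)
    · exact Or.inl (Or.inr (mem_iUnion₂.2 ⟨k, Finset.mem_Ico.2 ⟨hk0, hk⟩, mem_image_of_mem _ hs⟩))
  · exact hSW (pow_apply_mem_of_le hS hsS hk)

theorem pow_apply_notMem (h : CycleSkeleton f U₁ U₂ D₁ D₂ n₁ n₂) {s : α} (hs : s ∈ D₁)
    (hS : MapsTo f S S) (hSU : S ⊆ U₂) (hsS : (f ^ n₁) s ∈ S) {k : ℕ} (hk : k ≠ 0) :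
    (f ^ k) s ∉ U₁ := fun hU => by
  rcases Nat.lt_or_ge k n₁ with hlt | hge
  · exact hk (h.eq_zero_of_pow_apply_mem₁ hs hlt (Or.inl hU))
  · exact disjoint_left.1 h.disjoint hU (hSU (pow_apply_mem_of_le hS hsS hge))

end CycleSkeleton

theorem measurableSet_cycleSet [MeasurableSpace α] [StandardBorelSpace α] (hf : Measurable f)
    (hU₁ : MeasurableSet U₁) (hU₂ : MeasurableSet U₂) (hD₁ : MeasurableSet D₁)
    (hD₂ : MeasurableSet D₂) : MeasurableSet (cycleSet f U₁ U₂ D₁ D₂ n₁ n₂) := by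
  have himage : ∀ (i : ℕ) {D : Set α}, MeasurableSet D → MeasurableSet ((f ^ i) '' D) :=
    fun i _ hD => ((hf.iterate i).measurableEmbedding (f ^ i).injective).measurableSet_image.2 hD
  exact ((hU₁.union hU₂).union (.biUnion (to_countable _) fun i _ => himage i hD₁)).union
    (.biUnion (to_countable _) fun j _ => himage j hD₂)

end CycleSkeleton

section Measure

variable {α : Type*} [MeasurableSpace α] {μ : Measure α}

theorem MeasureTheory.MeasurePreserving.perm_inv [StandardBorelSpace α] {f : Perm α}
    (hf : MeasurePreserving f μ μ) : MeasurePreserving ⇑f⁻¹ μ μ := by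
  -- Lusin–Souslin: a measurable injection of a standard Borel space maps Borel sets to Borel sets.
  have hemb := hf.measurable.measurableEmbedding f.injective
  let e : α ≃ᵐ α := ⟨f, hf.measurable, fun s hs => by
    simpa only [← image_eq_preimage_symm] using hemb.measurableSet_image.2 hs⟩
  exact hf.symm e

theorem MeasureTheory.MeasurePreserving.perm_zpow [StandardBorelSpace α] {f : Perm α}
    (hf : MeasurePreserving f μ μ) (k : ℤ) : MeasurePreserving ⇑(f ^ k) μ μ := by
  induction k using Int.induction_on with
  | zero => exact MeasurePreserving.id μ
  | succ k ih => rw [zpow_add_one, Perm.coe_mul]; exact ih.comp hf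
  | pred k ih => rw [zpow_sub_one, Perm.coe_mul]; exact ih.comp hf.perm_inv

theorem ae_mem_iInter_zpow_image [StandardBorelSpace α] {f : Perm α}
    (hf : MeasurePreserving f μ μ) {W : Set α} (hW : ∀ᵐ x ∂μ, x ∈ W) :
    ∀ᵐ x ∂μ, x ∈ ⋂ k : ℤ, (f ^ k) '' W := by
  simp only [mem_iInter_zpow_image_iff]
  exact ae_all_iff.2 fun k => (hf.perm_zpow k).quasiMeasurePreserving.ae hW

theorem measure_iUnion_zpow_image_eq_zero [StandardBorelSpace α] {f : Perm α}
    (hf : MeasurePreserving f μ μ) {A : Set α} (hA : μ A = 0) :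
    μ (⋃ k : ℤ, (f ^ k) '' A) = 0 := by
  simp only [image_eq_preimage_symm, ← Perm.coe_inv, ← zpow_neg]
  exact measure_iUnion_null fun k => (hf.perm_zpow (-k)).quasiMeasurePreserving.preimage_null hA

theorem measure_eq_zero_of_pow_apply_notMem [IsFiniteMeasure μ] {f : Perm α}
    (hf : MeasurePreserving f μ μ) {A : Set α} (hA : MeasurableSet A)
    (hwander : ∀ x ∈ A, ∀ k ≠ 0, (f ^ k) x ∉ A) : μ A = 0 := by
  by_contra hA0
  obtain ⟨x, hx, k, hk, hkx⟩ := hf.conservative.exists_mem_iterate_mem hA.nullMeasurableSet hA0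
  exact hwander x hx k hk hkx

theorem eq_dirac_of_ae_eq [IsProbabilityMeasure μ] {a : α} (h : ∀ᵐ x ∂μ, x = a) :
    μ = Measure.dirac a := by
  calc μ = μ.map id := Measure.map_id.symm
    _ = μ.map fun _ => a := Measure.map_congr h
    _ = Measure.dirac a := by rw [Measure.map_const, measure_univ, one_smul]

theorem MeasureTheory.Ergodic.eq_dirac_or_eq_dirac [MeasurableSingletonClass α]
    [IsProbabilityMeasure μ] {f : Perm α} (hE : Ergodic f μ) {a b : α} (ha : f a = a)
    (hab : ∀ᵐ x ∂μ, x = a ∨ x = b) : μ = Measure.dirac a ∨ μ = Measure.dirac b := by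
  have hinv : f ⁻¹' {a} = {a} := by
    ext x
    exact ⟨fun hx => f.injective (hx.trans ha.symm), fun hx => hx ▸ ha⟩
  rcases hE.measure_self_or_compl_eq_zero (measurableSet_singleton a) hinv with h | h
  · right
    refine eq_dirac_of_ae_eq ?_
    filter_upwards [hab, measure_eq_zero_iff_ae_notMem.1 h] with x hx hxa
    exact hx.resolve_left hxa
  · exact Or.inl (eq_dirac_of_ae_eq h)

end Measure

section WeakLimit

open Topology

variable {α : Type*} [TopologicalSpace α] [NormalSpace α] [T1Space α] [MeasurableSpace α]
  [MeasurableSingletonClass α]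

theorem not_forall_tendsto_integral_of_eq_dirac {a b : α} (hab : a ≠ b) {t : ℝ}
    (ht : t ∈ Ioo (0 : ℝ) 1) {μs : ℕ → Measure α}
    (hμs : ∀ k, μs k = Measure.dirac a ∨ μs k = Measure.dirac b) :
    ¬ ∀ g : α → ℝ, Continuous g → (∃ C, ∀ x, |g x| ≤ C) →
      Tendsto (fun k => ∫ x, g x ∂(μs k)) atTop (𝓝 (t * g a + (1 - t) * g b)) := by
  intro hlim
  obtain ⟨g, hgb, hga, hg01⟩ := exists_continuous_zero_one_of_isClosed isClosed_singleton
    isClosed_singleton (disjoint_singleton.2 hab.symm)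
  have hbound : ∃ C, ∀ x, |g x| ≤ C :=
    ⟨1, fun x => abs_le.2 ⟨by linarith [(hg01 x).1], (hg01 x).2⟩⟩
  have hT := hlim g g.continuous hbound
  rw [hga rfl, hgb rfl, Pi.one_apply, Pi.zero_apply, mul_one, mul_zero, add_zero] at hT
  have hvalues : ∀ k, ∫ x, g x ∂(μs k) ∈ ({1, 0} : Set ℝ) := fun k => by
    rcases hμs k with h | h
    · exact Or.inl (by rw [h, integral_dirac, hga rfl, Pi.one_apply])
    · exact Or.inr (by rw [h, integral_dirac, hgb rfl, Pi.zero_apply]; rfl)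
  rcases (toFinite _).isClosed.mem_of_tendsto hT (Eventually.of_forall hvalues) with h | h
  · exact ht.2.ne h
  · exact ht.1.ne' h

end WeakLimit

section Cycle

variable {f : Perm E3} {Q u : E3} {n m : ℕ} {δ : ℝ}

@[simp] theorem Ppt_fst : Ppt.1 = 0 := rfl
@[simp] theorem Ppt_snd_fst : Ppt.2.1 = 0 := rfl
@[simp] theorem Ppt_snd_snd : Ppt.2.2 = 0 := rfl

theorem isOpen_bigCube (c : E3) (δ : ℝ) : IsOpen (bigCube c δ) := by
  simp only [bigCube, ofPred_and]
  exact (isOpen_lt (by fun_prop) continuous_const).inter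
    ((isOpen_lt (by fun_prop) continuous_const).inter (isOpen_lt (by fun_prop) continuous_const))

theorem isClosed_DeltaP (δ : ℝ) : IsClosed (DeltaP δ) := by
  simp only [DeltaP, ofPred_and]
  exact (isClosed_Icc.preimage (by fun_prop)).inter
    ((isClosed_Icc.preimage (by fun_prop)).inter (isClosed_Icc.preimage (by fun_prop)))

theorem isClosed_DeltaQ (Q : E3) (δ : ℝ) : IsClosed (DeltaQ Q δ) := by
  simp only [DeltaQ, ofPred_and]
  exact (isClosed_Icc.preimage (by fun_prop)).inter
    ((isClosed_Icc.preimage (by fun_prop)).inter (isClosed_Icc.preimage (by fun_prop)))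

theorem isClosed_gammaSeg (δ : ℝ) : IsClosed (gammaSeg δ) := by
  simp only [gammaSeg, ofPred_and]
  exact (isClosed_Icc.preimage (by fun_prop)).inter
    ((isClosed_eq (by fun_prop) continuous_const).inter
      (isClosed_eq (by fun_prop) continuous_const))

theorem cycleNbhd_eq_cycleSet :
    cycleNbhd f Q n m δ = cycleSet f (bigCube Ppt δ) (bigCube Q δ) (DeltaP δ) (DeltaQ Q δ) n m :=
  rfl

theorem mem_maxInvSet_iff :
    u ∈ maxInvSet f Q n m δ ↔ ∀ k : ℤ, (f ^ k) u ∈ cycleNbhd f Q n m δ :=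
  mem_iInter_zpow_image_iff

theorem pow_apply_mem_maxInvSet_iff (k : ℕ) :
    (f ^ k) u ∈ maxInvSet f Q n m δ ↔ u ∈ maxInvSet f Q n m δ :=
  pow_apply_mem_iff_of_zpow (fun j _ => zpow_apply_mem_iInter_zpow_image_iff j) k u

theorem inv_pow_apply_mem_maxInvSet_iff (k : ℕ) :
    (f⁻¹ ^ k) u ∈ maxInvSet f Q n m δ ↔ u ∈ maxInvSet f Q n m δ :=
  inv_pow_apply_mem_iff_of_zpow (fun j _ => zpow_apply_mem_iInter_zpow_image_iff j) k u

theorem pow_apply_mem_fullOrbit_iff {A : Set E3} (k : ℕ) :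
    (f ^ k) u ∈ fullOrbit f A ↔ u ∈ fullOrbit f A :=
  pow_apply_mem_iff_of_zpow (fun j _ => zpow_apply_mem_iUnion_zpow_image_iff j) k u

theorem inv_pow_apply_mem_fullOrbit_iff {A : Set E3} (k : ℕ) :
    (f⁻¹ ^ k) u ∈ fullOrbit f A ↔ u ∈ fullOrbit f A :=
  inv_pow_apply_mem_iff_of_zpow (fun j _ => zpow_apply_mem_iUnion_zpow_image_iff j) k u

theorem subset_fullOrbit (A : Set E3) : A ⊆ fullOrbit f A :=
  fun u hu => mem_iUnion.2 ⟨0, u, hu, rfl⟩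

theorem fullOrbit_subset_maxInvSet {A : Set E3} (hA : A ⊆ maxInvSet f Q n m δ) :
    fullOrbit f A ⊆ maxInvSet f Q n m δ := fun u hu => by
  obtain ⟨k, hk⟩ := mem_iUnion_zpow_image_iff.1 hu
  exact (zpow_apply_mem_iInter_zpow_image_iff k).1 (hA hk)

theorem pow_apply_mem_cycleNbhd (hu : u ∈ maxInvSet f Q n m δ) (k : ℕ) :
    (f ^ k) u ∈ cycleNbhd f Q n m δ := by
  rw [← zpow_natCast_apply]; exact mem_maxInvSet_iff.1 hu k

theorem inv_pow_apply_mem_cycleNbhd (hu : u ∈ maxInvSet f Q n m δ) (k : ℕ) :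
    (f⁻¹ ^ k) u ∈ cycleNbhd f Q n m δ := by
  rw [← zpow_neg_natCast_apply]; exact mem_maxInvSet_iff.1 hu (-k)

theorem mem_maxInvSet_of_pow_apply_eq {w : E3} {j k : ℕ} (hu : u ∈ maxInvSet f Q n m δ)
    (h : (f ^ j) w = (f⁻¹ ^ k) u) : w ∈ maxInvSet f Q n m δ := by
  rwa [← pow_apply_mem_maxInvSet_iff j, h, inv_pow_apply_mem_maxInvSet_iff]

theorem mem_fullOrbit_of_pow_apply_eq {A : Set E3} {w : E3} {j k : ℕ}
    (hw : w ∈ fullOrbit f A) (h : (f ^ j) w = (f⁻¹ ^ k) u) : u ∈ fullOrbit f A := by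
  rwa [← pow_apply_mem_fullOrbit_iff j, h, inv_pow_apply_mem_fullOrbit_iff] at hw

theorem mem_maxInvSet_of_forall (hfwd : ∀ k : ℕ, (f ^ k) u ∈ cycleNbhd f Q n m δ)
    (hbwd : ∀ k : ℕ, (f⁻¹ ^ k) u ∈ cycleNbhd f Q n m δ) : u ∈ maxInvSet f Q n m δ := by
  refine mem_maxInvSet_iff.2 fun k => ?_
  obtain ⟨k, rfl | rfl⟩ := Int.eq_nat_or_neg k
  · rw [zpow_natCast_apply]; exact hfwd k
  · rw [zpow_neg_natCast_apply]; exact hbwd k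

theorem mem_maxInvSet_of_apply_eq_self {c : E3} (hc : f c = c)
    (hW : c ∈ cycleNbhd f Q n m δ) : c ∈ maxInvSet f Q n m δ :=
  mem_maxInvSet_iff.2 fun k => by rwa [Perm.zpow_apply_eq_self_of_apply_eq_self hc]

theorem self_mem_bigCube (c : E3) (hδ : 0 ≤ δ) : c ∈ bigCube c δ := by
  refine ⟨?_, ?_, ?_⟩ <;> rw [sub_self, abs_zero] <;> linarith

theorem aPt_mem_closedBox (Q : E3) : aPt Q ∈ closedBox Q 0 0 1 := by
  refine ⟨?_, ?_, ?_⟩ <;> simp [aPt]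

end Cycle

structure NontwistedCycle (f : Perm E3) (Q : E3) (n m : ℕ) (δ : ℝ) : Prop where
  two_le : 2 ≤ n
  delta_pos : 0 < δ
  delta_le : δ ≤ ((4 : ℝ) ^ (n + m))⁻¹
  disjoint : bigCube Ppt δ ∩ bigCube Q δ = ∅
  disjoint_image_P : f '' bigCube Ppt δ ∩ bigCube Q δ = ∅
  disjoint_image_Q : f '' bigCube Q δ ∩ bigCube Ppt δ = ∅
  apply_of_mem_P : ∀ v ∈ bigCube Ppt δ, f v = (2 * v.1, v.2.1 / 4, 4 * v.2.2)
  apply_of_mem_Q : ∀ v ∈ bigCube Q δ,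
    f v = (Q.1 + (v.1 - Q.1) / 2, Q.2.1 + (v.2.1 - Q.2.1) / 4, Q.2.2 + 4 * (v.2.2 - Q.2.2))
  transition_P : ∀ x ∈ Icc (-δ) δ, ∀ y ∈ Icc (-δ) δ, ∀ z ∈ Icc (-δ) δ,
    (f ^ n) ((1 + x, y, z) : E3) = (Q.1 + (-1 + x), Q.2.1 + y / 4 ^ n, Q.2.2 + 4 ^ n * z) ∧
    ∀ i, 1 ≤ i → i < n → (f ^ i) ((1 + x, y, z) : E3) ∉ bigCube Ppt δ ∪ bigCube Q δ
  transition_Q : ∀ x ∈ Icc (-δ) δ, ∀ y ∈ Icc (-δ) δ, ∀ z ∈ Icc (-δ) δ,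
    (f ^ m) ((Q.1 + x, Q.2.1 + y, Q.2.2 + (-1 + z)) : E3) = ((1 : ℝ) * x, -1 + y / 4, 4 * z) ∧
    ∀ j, 1 ≤ j → j < m →
      (f ^ j) ((Q.1 + x, Q.2.1 + y, Q.2.2 + (-1 + z)) : E3) ∉ bigCube Ppt δ ∪ bigCube Q δ

namespace NontwistedCycle

variable {f : Perm E3} {Q u : E3} {n m : ℕ} {δ : ℝ}

theorem delta_le_one_div_sixteen (H : NontwistedCycle f Q n m δ) : δ ≤ 1 / 16 :=
  calc δ ≤ ((4 : ℝ) ^ (n + m))⁻¹ := H.delta_le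
    _ ≤ ((4 : ℝ) ^ 2)⁻¹ :=
      inv_anti₀ (by norm_num) (pow_le_pow_right₀ (by norm_num) (by linarith [H.two_le]))
    _ = 1 / 16 := by norm_num

theorem pow_mul_delta_le_one (H : NontwistedCycle f Q n m δ) : (4 : ℝ) ^ n * δ ≤ 1 :=
  calc (4 : ℝ) ^ n * δ ≤ (4 : ℝ) ^ n * ((4 : ℝ) ^ (n + m))⁻¹ :=
        mul_le_mul_of_nonneg_left H.delta_le (by positivity)
    _ = ((4 : ℝ) ^ m)⁻¹ := by rw [pow_add]; field_simp
    _ ≤ 1 := inv_le_one_of_one_le₀ (one_le_pow₀ (by norm_num))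

theorem eqOn_P (H : NontwistedCycle f Q n m δ) :
    EqOn f (diagAffine Ppt 2 4⁻¹ 4) (bigCube Ppt δ) := fun v hv => by
  rw [H.apply_of_mem_P v hv]; simp [diagAffine, div_eq_inv_mul]

theorem eqOn_Q (H : NontwistedCycle f Q n m δ) :
    EqOn f (diagAffine Q 2⁻¹ 4⁻¹ 4) (bigCube Q δ) := fun v hv => by
  rw [H.apply_of_mem_Q v hv]; simp [diagAffine, div_eq_inv_mul]

theorem inv_apply_P (H : NontwistedCycle f Q n m δ) {v : E3} (hv : f⁻¹ v ∈ bigCube Ppt δ) :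
    f⁻¹ v = diagAffine Ppt 2⁻¹ 4 4⁻¹ v :=
  inv_apply_eq_of_eqOn H.eqOn_P (diagAffine_diagAffine_eq_self (by norm_num) (by norm_num)
    (by norm_num)) hv

theorem inv_apply_Q (H : NontwistedCycle f Q n m δ) {v : E3} (hv : f⁻¹ v ∈ bigCube Q δ) :
    f⁻¹ v = diagAffine Q 2 4 4⁻¹ v :=
  inv_apply_eq_of_eqOn H.eqOn_Q (diagAffine_diagAffine_eq_self (by norm_num) (by norm_num)
    (by norm_num)) hv

theorem DeltaP_subset (H : NontwistedCycle f Q n m δ) : DeltaP δ ⊆ bigCube Ppt δ :=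
  fun v ⟨h₁, h₂, h₃⟩ => by
    have := H.delta_pos
    refine ⟨?_, ?_, ?_⟩ <;> simp only [Ppt_fst, Ppt_snd_fst, Ppt_snd_snd, sub_zero, abs_lt] <;>
      constructor <;> linarith [h₁.1, h₁.2, h₂.1, h₂.2, h₃.1, h₃.2]

theorem DeltaQ_subset (H : NontwistedCycle f Q n m δ) : DeltaQ Q δ ⊆ bigCube Q δ :=
  fun v ⟨h₁, h₂, h₃⟩ => by
    have := H.delta_pos
    refine ⟨?_, ?_, ?_⟩ <;> rw [abs_lt] <;> constructor <;>
      linarith [h₁.1, h₁.2, h₂.1, h₂.2, h₃.1, h₃.2]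

theorem pow_apply_of_mem_DeltaP (H : NontwistedCycle f Q n m δ) {w : E3} (hw : w ∈ DeltaP δ) :
    (f ^ n) w = (Q.1 + (w.1 - 2), Q.2.1 + w.2.1 / 4 ^ n, Q.2.2 + 4 ^ n * w.2.2) := by
  obtain ⟨⟨h₁, h₁'⟩, h₂, h₃⟩ := hw
  have h := (H.transition_P (w.1 - 1) ⟨by linarith, by linarith⟩ _ h₂ _ h₃).1
  rwa [add_sub_cancel, show -1 + (w.1 - 1) = w.1 - 2 by ring] at h

theorem pow_apply_of_mem_DeltaQ (H : NontwistedCycle f Q n m δ) {v : E3}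
    (hv : v ∈ DeltaQ Q δ) :
    (f ^ m) v = (v.1 - Q.1, -1 + (v.2.1 - Q.2.1) / 4, 4 * (v.2.2 - Q.2.2 + 1)) := by
  obtain ⟨h₁, h₂, ⟨h₃, h₃'⟩⟩ := hv
  have h := (H.transition_Q _ h₁ _ h₂ (v.2.2 - Q.2.2 + 1) ⟨by linarith, by linarith⟩).1
  rwa [add_sub_cancel, add_sub_cancel, show -1 + (v.2.2 - Q.2.2 + 1) = v.2.2 - Q.2.2 by ring,
    add_sub_cancel, one_mul] at h

theorem mapsTo_pow_DeltaP (H : NontwistedCycle f Q n m δ) :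
    MapsTo ⇑(f ^ n) (DeltaP δ) (bigCube Q δ) := fun w hw => by
  have hδ := H.delta_pos
  have h4 := H.pow_mul_delta_le_one
  have h4pos : (0 : ℝ) < 4 ^ n := by positivity
  rw [H.pow_apply_of_mem_DeltaP hw]
  obtain ⟨⟨h₁, h₁'⟩, ⟨h₂, h₂'⟩, ⟨h₃, h₃'⟩⟩ := hw
  refine ⟨?_, ?_, ?_⟩ <;> simp only [add_sub_cancel_left, abs_lt]
  · constructor <;> linarith
  · rw [lt_div_iff₀ h4pos, div_lt_iff₀ h4pos]
    constructor <;> nlinarith [one_le_pow₀ (M₀ := ℝ) (a := 4) (n := n) (by norm_num)]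
  · constructor <;> nlinarith

theorem mapsTo_pow_DeltaQ (H : NontwistedCycle f Q n m δ) :
    MapsTo ⇑(f ^ m) (DeltaQ Q δ) (bigCube Ppt δ) := fun v hv => by
  have hδ := H.delta_pos
  have hδ' := H.delta_le_one_div_sixteen
  rw [H.pow_apply_of_mem_DeltaQ hv]
  obtain ⟨⟨h₁, h₁'⟩, ⟨h₂, h₂'⟩, ⟨h₃, h₃'⟩⟩ := hv
  refine ⟨?_, ?_, ?_⟩ <;> simp only [Ppt_fst, Ppt_snd_fst, Ppt_snd_snd, sub_zero, abs_lt] <;>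
    constructor <;> linarith

theorem pow_apply_notMem_of_mem_DeltaP (H : NontwistedCycle f Q n m δ) {w : E3}
    (hw : w ∈ DeltaP δ) {i : ℕ} (hi : i ∈ Finset.Ico 1 n) :
    (f ^ i) w ∉ bigCube Ppt δ ∪ bigCube Q δ := by
  obtain ⟨⟨h₁, h₁'⟩, h₂, h₃⟩ := hw
  have h := (H.transition_P (w.1 - 1) ⟨by linarith, by linarith⟩ _ h₂ _ h₃).2 i
    (Finset.mem_Ico.1 hi).1 (Finset.mem_Ico.1 hi).2
  rwa [add_sub_cancel] at h

theorem pow_apply_notMem_of_mem_DeltaQ (H : NontwistedCycle f Q n m δ) {v : E3}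
    (hv : v ∈ DeltaQ Q δ) {j : ℕ} (hj : j ∈ Finset.Ico 1 m) :
    (f ^ j) v ∉ bigCube Ppt δ ∪ bigCube Q δ := by
  obtain ⟨h₁, h₂, ⟨h₃, h₃'⟩⟩ := hv
  have h := (H.transition_Q _ h₁ _ h₂ (v.2.2 - Q.2.2 + 1) ⟨by linarith, by linarith⟩).2 j
    (Finset.mem_Ico.1 hj).1 (Finset.mem_Ico.1 hj).2
  rwa [add_sub_cancel, add_sub_cancel, show -1 + (v.2.2 - Q.2.2 + 1) = v.2.2 - Q.2.2 by ring,
    add_sub_cancel] at h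

theorem skeleton (H : NontwistedCycle f Q n m δ) :
    CycleSkeleton f (bigCube Ppt δ) (bigCube Q δ) (DeltaP δ) (DeltaQ Q δ) n m where
  disjoint := disjoint_iff_inter_eq_empty.2 H.disjoint
  disjoint_image₁ := disjoint_iff_inter_eq_empty.2 H.disjoint_image_P
  disjoint_image₂ := disjoint_iff_inter_eq_empty.2 H.disjoint_image_Q
  subset₁ := H.DeltaP_subset
  subset₂ := H.DeltaQ_subset
  mapsTo₁ := H.mapsTo_pow_DeltaP
  mapsTo₂ := H.mapsTo_pow_DeltaQ
  transit₁ _ hw _ hi := H.pow_apply_notMem_of_mem_DeltaP hw hi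
  transit₂ _ hv _ hj := H.pow_apply_notMem_of_mem_DeltaQ hv hj

theorem apply_Ppt (H : NontwistedCycle f Q n m δ) : f Ppt = Ppt :=
  (H.eqOn_P (self_mem_bigCube Ppt H.delta_pos.le)).trans diagAffine_self

theorem apply_Q (H : NontwistedCycle f Q n m δ) : f Q = Q :=
  (H.eqOn_Q (self_mem_bigCube Q H.delta_pos.le)).trans diagAffine_self

theorem Ppt_ne_Q (H : NontwistedCycle f Q n m δ) : Ppt ≠ Q := fun h =>
  disjoint_left.1 H.skeleton.disjoint (self_mem_bigCube Ppt H.delta_pos.le)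
    (h ▸ self_mem_bigCube Q H.delta_pos.le)

theorem forward_itinerary_P (H : NontwistedCycle f Q n m δ) (hu : u ∈ maxInvSet f Q n m δ)
    (hP : u ∈ bigCube Ppt δ) :
    (u.1 = 0 ∧ u.2.2 = 0) ∨
      ∃ k, (f ^ k) u ∈ DeltaP δ ∧ (f ^ k) u = diagAffine Ppt (2 ^ k) (4⁻¹ ^ k) (4 ^ k) u := by
  rcases H.skeleton.forward_itinerary H.eqOn_P hP (pow_apply_mem_cycleNbhd hu) with
    hstay | ⟨k, hk, he⟩
  · have h := eq_of_forall_iterate_diagAffine_mem_bigCube hstay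
    exact Or.inl ⟨h.1 (by norm_num), h.2.2 (by norm_num)⟩
  · exact Or.inr ⟨k, hk, by rw [he, iterate_diagAffine]⟩

theorem backward_itinerary_P (H : NontwistedCycle f Q n m δ) (hu : u ∈ maxInvSet f Q n m δ)
    (hP : u ∈ bigCube Ppt δ) :
    u.2.1 = 0 ∨ ∃ k, (f⁻¹ ^ k) u ∈ (f ^ m) '' DeltaQ Q δ ∧
      (f⁻¹ ^ k) u = diagAffine Ppt (2⁻¹ ^ k) (4 ^ k) (4⁻¹ ^ k) u := by
  rcases H.skeleton.backward_itinerary (fun _ => H.inv_apply_P) hP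
    (inv_pow_apply_mem_cycleNbhd hu) with hstay | ⟨k, hk, he⟩
  · exact Or.inl ((eq_of_forall_iterate_diagAffine_mem_bigCube hstay).2.1 (by norm_num))
  · exact Or.inr ⟨k, hk, by rw [he, iterate_diagAffine]⟩

theorem forward_itinerary_Q (H : NontwistedCycle f Q n m δ) (hu : u ∈ maxInvSet f Q n m δ)
    (hQ : u ∈ bigCube Q δ) :
    u.2.2 = Q.2.2 ∨
      ∃ k, (f ^ k) u ∈ DeltaQ Q δ ∧ (f ^ k) u = diagAffine Q (2⁻¹ ^ k) (4⁻¹ ^ k) (4 ^ k) u := by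
  rcases H.skeleton.symm.forward_itinerary H.eqOn_Q hQ
    (cycleSet_comm (f := f) ▸ pow_apply_mem_cycleNbhd hu) with hstay | ⟨k, hk, he⟩
  · exact Or.inl ((eq_of_forall_iterate_diagAffine_mem_bigCube hstay).2.2 (by norm_num))
  · exact Or.inr ⟨k, hk, by rw [he, iterate_diagAffine]⟩

theorem backward_itinerary_Q (H : NontwistedCycle f Q n m δ) (hu : u ∈ maxInvSet f Q n m δ)
    (hQ : u ∈ bigCube Q δ) :
    (u.1 = Q.1 ∧ u.2.1 = Q.2.1) ∨ ∃ k, (f⁻¹ ^ k) u ∈ (f ^ n) '' DeltaP δ ∧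
      (f⁻¹ ^ k) u = diagAffine Q (2 ^ k) (4 ^ k) (4⁻¹ ^ k) u := by
  rcases H.skeleton.symm.backward_itinerary (fun _ => H.inv_apply_Q) hQ
    (cycleSet_comm (f := f) ▸ inv_pow_apply_mem_cycleNbhd hu) with hstay | ⟨k, hk, he⟩
  · have h := eq_of_forall_iterate_diagAffine_mem_bigCube hstay
    exact Or.inl ⟨h.1 (by norm_num), h.2.1 (by norm_num)⟩
  · exact Or.inr ⟨k, hk, by rw [he, iterate_diagAffine]⟩

theorem fst_eq_zero_of_fst_nonpos (H : NontwistedCycle f Q n m δ)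
    (hu : u ∈ maxInvSet f Q n m δ) (hP : u ∈ bigCube Ppt δ) (hx : u.1 ≤ 0) :
    u.1 = 0 ∧ u.2.2 = 0 := by
  refine (H.forward_itinerary_P hu hP).resolve_right fun ⟨k, hk, he⟩ => ?_
  have h₁ := hk.1.1
  rw [he] at h₁
  simp only [diagAffine, Ppt_fst, sub_zero, zero_add] at h₁
  linarith [H.delta_le_one_div_sixteen,
    mul_nonpos_of_nonneg_of_nonpos (pow_nonneg zero_le_two k) hx]

theorem eq_aPt_of_mem_DeltaQ (H : NontwistedCycle f Q n m δ) (hu : u ∈ maxInvSet f Q n m δ)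
    (hΔ : u ∈ DeltaQ Q δ) : u = aPt Q := by
  -- As `ε = +1`, `f ^ m` keeps the sign of the `x`-offset from `Q`.
  have hp := H.fst_eq_zero_of_fst_nonpos ((pow_apply_mem_maxInvSet_iff m).2 hu)
    (H.skeleton.mapsTo₂ hΔ)
  rw [H.pow_apply_of_mem_DeltaQ hΔ] at hp
  simp only at hp
  rcases H.backward_itinerary_Q hu (H.DeltaQ_subset hΔ) with ⟨hx, hy⟩ | ⟨k, ⟨w, hw, hwu⟩, he⟩
  · obtain ⟨-, hz⟩ := hp (by rw [hx, sub_self])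
    ext <;> simp only [aPt] <;> linarith
  · exfalso
    have h₁ := congrArg Prod.fst (hwu.trans he)
    rw [H.pow_apply_of_mem_DeltaP hw] at h₁
    simp only [diagAffine, add_right_inj] at h₁
    have hneg : 2 ^ k * (u.1 - Q.1) < 0 := by
      rw [← h₁]; linarith [hw.1.2, H.delta_le_one_div_sixteen]
    have hx : u.1 - Q.1 < 0 := neg_of_mul_neg_right hneg (pow_nonneg zero_le_two k)
    linarith [(hp hx.le).1]

theorem mem_gammaSeg_of_mem_DeltaP (H : NontwistedCycle f Q n m δ)
    (hu : u ∈ maxInvSet f Q n m δ) (hΔ : u ∈ DeltaP δ) : u ∈ gammaSeg δ := by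
  have hpos : 0 < u.1 := by linarith [hΔ.1.1, H.delta_le_one_div_sixteen]
  refine ⟨hΔ.1, ?_, ?_⟩
  · rcases H.backward_itinerary_P hu (H.DeltaP_subset hΔ) with hy | ⟨k, ⟨w, hw, hwu⟩, he⟩
    · exact hy
    · have hwΛ := mem_maxInvSet_of_pow_apply_eq hu hwu
      have h₁ := congrArg Prod.fst (hwu.trans he)
      rw [H.pow_apply_of_mem_DeltaQ hw, H.eq_aPt_of_mem_DeltaQ hwΛ hw] at h₁
      simp only [aPt, diagAffine, sub_self, Ppt_fst, sub_zero, zero_add] at h₁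
      exact absurd h₁.symm (mul_ne_zero (by positivity) hpos.ne')
  · have hq := pow_apply_mem_maxInvSet_iff (f := f) n |>.2 hu
    rcases H.forward_itinerary_Q hq (H.skeleton.mapsTo₁ hΔ) with hz | ⟨k, hk, he⟩
    · rw [H.pow_apply_of_mem_DeltaP hΔ] at hz
      simpa using hz
    · have hvΛ := (pow_apply_mem_maxInvSet_iff k).2 hq
      have h₁ := congrArg Prod.fst ((H.eq_aPt_of_mem_DeltaQ hvΛ hk).symm.trans he)
      rw [H.pow_apply_of_mem_DeltaP hΔ] at h₁
      simp only [aPt, diagAffine, add_sub_cancel_left, left_eq_add] at h₁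
      exact absurd h₁
        (mul_ne_zero (by positivity) (by linarith [hΔ.1.2, H.delta_le_one_div_sixteen]))

theorem maxInvSet_subset (H : NontwistedCycle f Q n m δ) :
    maxInvSet f Q n m δ ⊆ {Ppt} ∪ {Q} ∪ fullOrbit f (gammaSeg δ) ∪ fullOrbit f {aPt Q} := by
  intro u hu
  have hγ : ∀ {w}, w ∈ maxInvSet f Q n m δ → w ∈ DeltaP δ → w ∈ fullOrbit f (gammaSeg δ) :=
    fun hw hΔ => subset_fullOrbit _ (H.mem_gammaSeg_of_mem_DeltaP hw hΔ)
  have ha : ∀ {w}, w ∈ maxInvSet f Q n m δ → w ∈ DeltaQ Q δ → w ∈ fullOrbit f {aPt Q} :=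
    fun hw hΔ => subset_fullOrbit _ (H.eq_aPt_of_mem_DeltaQ hw hΔ)
  rcases mem_maxInvSet_iff.1 hu 0 with ((hP | hQ) | hT₁) | hT₂
  · rcases H.forward_itinerary_P hu hP with ⟨hx, hz⟩ | ⟨k, hk, -⟩
    · rcases H.backward_itinerary_P hu hP with hy | ⟨k, ⟨w, hw, hwu⟩, -⟩
      · exact Or.inl (Or.inl (Or.inl (Prod.ext hx (Prod.ext hy hz))))
      · exact Or.inr (mem_fullOrbit_of_pow_apply_eq
          (ha (mem_maxInvSet_of_pow_apply_eq hu hwu) hw) hwu)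
    · exact Or.inl (Or.inr ((pow_apply_mem_fullOrbit_iff k).1
        (hγ ((pow_apply_mem_maxInvSet_iff k).2 hu) hk)))
  · rcases H.forward_itinerary_Q hu hQ with hz | ⟨k, hk, -⟩
    · rcases H.backward_itinerary_Q hu hQ with ⟨hx, hy⟩ | ⟨k, ⟨w, hw, hwu⟩, -⟩
      · exact Or.inl (Or.inl (Or.inr (Prod.ext hx (Prod.ext hy hz))))
      · exact Or.inl (Or.inr (mem_fullOrbit_of_pow_apply_eq
          (hγ (mem_maxInvSet_of_pow_apply_eq hu hwu) hw) hwu))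
    · exact Or.inr ((pow_apply_mem_fullOrbit_iff k).1
        (ha ((pow_apply_mem_maxInvSet_iff k).2 hu) hk))
  · obtain ⟨i, -, w, hw, hwu⟩ := mem_iUnion₂.1 hT₁
    rw [zpow_zero, Perm.one_apply] at hwu
    subst hwu
    exact Or.inl (Or.inr ((pow_apply_mem_fullOrbit_iff i).2
      (hγ ((pow_apply_mem_maxInvSet_iff i).1 hu) hw)))
  · obtain ⟨j, -, w, hw, hwu⟩ := mem_iUnion₂.1 hT₂
    rw [zpow_zero, Perm.one_apply] at hwu
    subst hwu
    exact Or.inr ((pow_apply_mem_fullOrbit_iff j).2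
      (ha ((pow_apply_mem_maxInvSet_iff j).1 hu) hw))

theorem closedBox_subset (H : NontwistedCycle f Q n m δ) (c : E3) {r₁ r₂ r₃ : ℝ}
    (h₁ : r₁ ≤ 1 + δ) (h₂ : r₂ ≤ 1 + δ) (h₃ : r₃ ≤ 1 + δ) :
    closedBox c r₁ r₂ r₃ ⊆ bigCube c δ := by
  have := H.delta_pos
  exact closedBox_subset_bigCube (by linarith) (by linarith) (by linarith)

/- The next four segments are pieces of the local stable and unstable manifolds of `P` and `Q`;
they carry the forward and backward orbits of `γ` and `a`. -/

theorem mapsTo_closedBox_Q (H : NontwistedCycle f Q n m δ) :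
    MapsTo f (closedBox Q (1 + δ) 0 0) (closedBox Q (1 + δ) 0 0) := by
  have := H.delta_pos
  refine (mapsTo_diagAffine_closedBox ?_ (by simp) (by simp)).congr
    (H.eqOn_Q.mono (H.closedBox_subset Q le_rfl (by linarith) (by linarith))).symm
  rw [abs_of_pos (by norm_num)]; linarith

theorem mapsTo_closedBox_P (H : NontwistedCycle f Q n m δ) :
    MapsTo f (closedBox Ppt 0 1 0) (closedBox Ppt 0 1 0) := by
  have := H.delta_pos
  refine (mapsTo_diagAffine_closedBox (by simp) ?_ (by simp)).congr
    (H.eqOn_P.mono (H.closedBox_subset Ppt (by linarith) (by linarith) (by linarith))).symm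
  rw [abs_of_pos (by norm_num)]; norm_num

theorem mapsTo_inv_closedBox_P (H : NontwistedCycle f Q n m δ) :
    MapsTo ⇑f⁻¹ (closedBox Ppt (1 + δ) 0 0) (closedBox Ppt (1 + δ) 0 0) := by
  have := H.delta_pos
  refine mapsTo_inv_of_eqOn (L' := diagAffine Ppt 2⁻¹ 4 4⁻¹) H.eqOn_P
    (H.closedBox_subset Ppt le_rfl (by linarith) (by linarith))
    (mapsTo_diagAffine_closedBox ?_ (by simp) (by simp))
    fun v _ => diagAffine_diagAffine_eq_self (by norm_num) (by norm_num) (by norm_num) v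
  rw [abs_of_pos (by norm_num)]; linarith

theorem mapsTo_inv_closedBox_Q (H : NontwistedCycle f Q n m δ) :
    MapsTo ⇑f⁻¹ (closedBox Q 0 0 1) (closedBox Q 0 0 1) := by
  have := H.delta_pos
  refine mapsTo_inv_of_eqOn (L' := diagAffine Q 2 4 4⁻¹) H.eqOn_Q
    (H.closedBox_subset Q (by linarith) (by linarith) (by linarith))
    (mapsTo_diagAffine_closedBox (by simp) (by simp) ?_)
    fun v _ => diagAffine_diagAffine_eq_self (by norm_num) (by norm_num) (by norm_num) v
  rw [abs_of_pos (by norm_num)]; norm_num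

theorem gammaSeg_subset_DeltaP (H : NontwistedCycle f Q n m δ) : gammaSeg δ ⊆ DeltaP δ :=
  fun s ⟨h₁, h₂, h₃⟩ => by
    have := H.delta_pos
    exact ⟨h₁, by rw [h₂]; constructor <;> linarith, by rw [h₃]; constructor <;> linarith⟩

theorem gammaSeg_subset_closedBox (H : NontwistedCycle f Q n m δ) :
    gammaSeg δ ⊆ closedBox Ppt (1 + δ) 0 0 := fun s ⟨⟨h₁, h₁'⟩, h₂, h₃⟩ => by
  have := H.delta_pos
  refine ⟨?_, ?_, ?_⟩ <;> simp only [Ppt_fst, Ppt_snd_fst, Ppt_snd_snd, sub_zero, h₂, h₃,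
    abs_zero, le_refl, abs_le]
  constructor <;> linarith

theorem pow_apply_mem_closedBox_of_mem_gammaSeg (H : NontwistedCycle f Q n m δ) {s : E3}
    (hs : s ∈ gammaSeg δ) : (f ^ n) s ∈ closedBox Q (1 + δ) 0 0 := by
  obtain ⟨⟨h₁, h₁'⟩, h₂, h₃⟩ := hs
  rw [H.pow_apply_of_mem_DeltaP (H.gammaSeg_subset_DeltaP ⟨⟨h₁, h₁'⟩, h₂, h₃⟩)]
  refine ⟨?_, ?_, ?_⟩ <;> simp only [add_sub_cancel_left, h₂, h₃, zero_div, mul_zero, abs_zero,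
    le_refl, abs_le]
  constructor <;> linarith

theorem aPt_mem_DeltaQ (H : NontwistedCycle f Q n m δ) : aPt Q ∈ DeltaQ Q δ := by
  have := H.delta_pos
  refine ⟨?_, ?_, ?_⟩ <;> simp only [aPt, sub_self, sub_sub_cancel_left] <;> constructor <;>
    linarith

theorem pow_apply_aPt_mem_closedBox (H : NontwistedCycle f Q n m δ) :
    (f ^ m) (aPt Q) ∈ closedBox Ppt 0 1 0 := by
  rw [H.pow_apply_of_mem_DeltaQ H.aPt_mem_DeltaQ]
  refine ⟨?_, ?_, ?_⟩ <;> simp [aPt]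

theorem gammaSeg_subset_maxInvSet (H : NontwistedCycle f Q n m δ) :
    gammaSeg δ ⊆ maxInvSet f Q n m δ := fun s hs => by
  have := H.delta_pos
  refine mem_maxInvSet_of_forall (H.skeleton.pow_apply_mem_cycleSet (H.gammaSeg_subset_DeltaP hs)
    H.mapsTo_closedBox_Q ((H.closedBox_subset Q le_rfl (by linarith) (by linarith)).trans
      subset_cycleSet₂) (H.pow_apply_mem_closedBox_of_mem_gammaSeg hs)) fun k => ?_
  exact subset_cycleSet₁ (H.closedBox_subset Ppt le_rfl (by linarith) (by linarith)
    (H.mapsTo_inv_closedBox_P.perm_pow k (H.gammaSeg_subset_closedBox hs)))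

theorem aPt_mem_maxInvSet (H : NontwistedCycle f Q n m δ) : aPt Q ∈ maxInvSet f Q n m δ := by
  have := H.delta_pos
  refine mem_maxInvSet_of_forall (fun k => ?_) fun k => ?_
  · rw [cycleNbhd_eq_cycleSet, ← cycleSet_comm]
    exact H.skeleton.symm.pow_apply_mem_cycleSet H.aPt_mem_DeltaQ H.mapsTo_closedBox_P
      ((H.closedBox_subset Ppt (by linarith) (by linarith) (by linarith)).trans
        subset_cycleSet₂) H.pow_apply_aPt_mem_closedBox k
  · exact subset_cycleSet₂ (H.closedBox_subset Q (by linarith) (by linarith) (by linarith)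
      (H.mapsTo_inv_closedBox_Q.perm_pow k (aPt_mem_closedBox Q)))

theorem maxInvSet_eq (H : NontwistedCycle f Q n m δ) :
    maxInvSet f Q n m δ = {Ppt} ∪ {Q} ∪ fullOrbit f (gammaSeg δ) ∪ fullOrbit f {aPt Q} := by
  refine H.maxInvSet_subset.antisymm (union_subset (union_subset (union_subset ?_ ?_) ?_) ?_)
  · exact singleton_subset_iff.2
      (mem_maxInvSet_of_apply_eq_self H.apply_Ppt
        (subset_cycleSet₁ (self_mem_bigCube Ppt H.delta_pos.le)))
  · exact singleton_subset_iff.2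
      (mem_maxInvSet_of_apply_eq_self H.apply_Q
        (subset_cycleSet₂ (self_mem_bigCube Q H.delta_pos.le)))
  · exact fullOrbit_subset_maxInvSet H.gammaSeg_subset_maxInvSet
  · exact fullOrbit_subset_maxInvSet (singleton_subset_iff.2 H.aPt_mem_maxInvSet)

theorem pow_apply_notMem_gammaSeg (H : NontwistedCycle f Q n m δ) {s : E3}
    (hs : s ∈ gammaSeg δ) {k : ℕ} (hk : k ≠ 0) : (f ^ k) s ∉ gammaSeg δ := fun h => by
  have := H.delta_pos
  exact H.skeleton.pow_apply_notMem (H.gammaSeg_subset_DeltaP hs) H.mapsTo_closedBox_Q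
    (H.closedBox_subset Q le_rfl (by linarith) (by linarith))
    (H.pow_apply_mem_closedBox_of_mem_gammaSeg hs) hk
    (H.DeltaP_subset (H.gammaSeg_subset_DeltaP h))

theorem pow_apply_aPt_ne (H : NontwistedCycle f Q n m δ) {k : ℕ} (hk : k ≠ 0) :
    (f ^ k) (aPt Q) ≠ aPt Q := fun h => by
  have := H.delta_pos
  exact H.skeleton.symm.pow_apply_notMem H.aPt_mem_DeltaQ H.mapsTo_closedBox_P
    (H.closedBox_subset Ppt (by linarith) (by linarith) (by linarith))
    H.pow_apply_aPt_mem_closedBox hk (by rw [h]; exact H.DeltaQ_subset H.aPt_mem_DeltaQ)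

theorem eq_dirac_of_ergodic (H : NontwistedCycle f Q n m δ) {μ : Measure E3}
    [IsProbabilityMeasure μ] (hE : Ergodic f μ) (hW : μ (cycleNbhd f Q n m δ) = 1) :
    μ = Measure.dirac Ppt ∨ μ = Measure.dirac Q := by
  have hf := hE.toMeasurePreserving
  have hWm : MeasurableSet (cycleNbhd f Q n m δ) :=
    measurableSet_cycleSet hf.measurable (isOpen_bigCube _ _).measurableSet
      (isOpen_bigCube _ _).measurableSet (isClosed_DeltaP δ).measurableSet
      (isClosed_DeltaQ Q δ).measurableSet
  have hWae : ∀ᵐ x ∂μ, x ∈ cycleNbhd f Q n m δ :=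
    (ae_mem_iff_measure_eq hWm.nullMeasurableSet).2 (by rw [hW, measure_univ])
  have hΛ : ∀ᵐ x ∂μ, x ∈ maxInvSet f Q n m δ := ae_mem_iInter_zpow_image hf hWae
  have hγ : μ (fullOrbit f (gammaSeg δ)) = 0 := measure_iUnion_zpow_image_eq_zero hf
    (measure_eq_zero_of_pow_apply_notMem hf (isClosed_gammaSeg δ).measurableSet
      fun _ hs _ hk => H.pow_apply_notMem_gammaSeg hs hk)
  have ha : μ (fullOrbit f {aPt Q}) = 0 := measure_iUnion_zpow_image_eq_zero hf
    (measure_eq_zero_of_pow_apply_notMem hf (measurableSet_singleton _)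
      fun _ hx _ hk => by rw [mem_singleton_iff.1 hx]; exact H.pow_apply_aPt_ne hk)
  refine hE.eq_dirac_or_eq_dirac H.apply_Ppt ?_
  filter_upwards [hΛ, measure_eq_zero_iff_ae_notMem.1 hγ, measure_eq_zero_iff_ae_notMem.1 ha]
    with x hx hxγ hxa
  rw [H.maxInvSet_eq] at hx
  rcases hx with ((hP | hQ) | hγx) | hax
  exacts [Or.inl hP, Or.inr hQ, absurd hγx hxγ, absurd hax hxa]

end NontwistedCycle

theorem nontwisted_cycle_maximal_invariant_set_general
    (n m : ℕ) (hn : 2 ≤ n)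
    (δ : ℝ) (hδ0 : 0 < δ) (hδ : δ ≤ ((4 : ℝ) ^ (n + m))⁻¹)
    (Q : E3) (f : Equiv.Perm E3)
    (hdisj : bigCube Ppt δ ∩ bigCube Q δ = ∅)
    (hdisjPQ : f '' bigCube Ppt δ ∩ bigCube Q δ = ∅)
    (hdisjQP : f '' bigCube Q δ ∩ bigCube Ppt δ = ∅)
    (hlocP : ∀ v ∈ bigCube Ppt δ, f v = (2 * v.1, v.2.1 / 4, 4 * v.2.2))
    (hlocQ : ∀ v ∈ bigCube Q δ,
      f v = (Q.1 + (v.1 - Q.1) / 2, Q.2.1 + (v.2.1 - Q.2.1) / 4, Q.2.2 + 4 * (v.2.2 - Q.2.2)))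
    (htransP : ∀ x ∈ Set.Icc (-δ) δ, ∀ y ∈ Set.Icc (-δ) δ, ∀ z ∈ Set.Icc (-δ) δ,
      (f ^ n) ((1 + x, y, z) : E3)
          = (Q.1 + (-1 + x), Q.2.1 + y / 4 ^ n, Q.2.2 + 4 ^ n * z) ∧
      ∀ i, 1 ≤ i → i < n →
        (f ^ i) ((1 + x, y, z) : E3) ∉ bigCube Ppt δ ∪ bigCube Q δ)
    (htransQ : ∀ x ∈ Set.Icc (-δ) δ, ∀ y ∈ Set.Icc (-δ) δ, ∀ z ∈ Set.Icc (-δ) δ,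
      (f ^ m) ((Q.1 + x, Q.2.1 + y, Q.2.2 + (-1 + z)) : E3)
          = ((1 : ℝ) * x, -1 + y / 4, 4 * z) ∧
      ∀ j, 1 ≤ j → j < m →
        (f ^ j) ((Q.1 + x, Q.2.1 + y, Q.2.2 + (-1 + z)) : E3) ∉
          bigCube Ppt δ ∪ bigCube Q δ) :
    maxInvSet f Q n m δ
        = {Ppt} ∪ {Q} ∪ fullOrbit f (gammaSeg δ) ∪ fullOrbit f {aPt Q} ∧
    (∀ μ : Measure E3, IsProbabilityMeasure μ → Ergodic (⇑f) μ →
      μ (cycleNbhd f Q n m δ) = 1 → μ = Measure.dirac Ppt ∨ μ = Measure.dirac Q) ∧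
    (∀ t ∈ Set.Ioo (0 : ℝ) 1,
      ¬ ∃ μseq : ℕ → Measure E3,
        (∀ k, IsProbabilityMeasure (μseq k) ∧ Ergodic (⇑f) (μseq k) ∧
          μseq k (cycleNbhd f Q n m δ) = 1) ∧
        (∀ g : E3 → ℝ, Continuous g → (∃ C, ∀ x, |g x| ≤ C) →
          Tendsto (fun k => ∫ x, g x ∂(μseq k)) atTop
            (nhds (t * g Ppt + (1 - t) * g Q)))) := by
  have H : NontwistedCycle f Q n m δ :=
    ⟨hn, hδ0, hδ, hdisj, hdisjPQ, hdisjQP, hlocP, hlocQ, htransP, htransQ⟩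
  have hergodic : ∀ μ : Measure E3, IsProbabilityMeasure μ → Ergodic (⇑f) μ →
      μ (cycleNbhd f Q n m δ) = 1 → μ = Measure.dirac Ppt ∨ μ = Measure.dirac Q :=
    fun _ _ hE hW => H.eq_dirac_of_ergodic hE hW
  refine ⟨H.maxInvSet_eq, hergodic, fun t ht ⟨μseq, hμseq, hlim⟩ => ?_⟩
  refine not_forall_tendsto_integral_of_eq_dirac H.Ppt_ne_Q ht (fun k => ?_) hlim
  obtain ⟨hprob, hE, hW⟩ := hμseq k
  exact hergodic _ hprob hE hW

/-- **Proposition 6.1 (non-twisted cycle, `ε = +1`).** For the non-twisted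
heterodimensional cycle the maximal invariant set in the cycle neighborhood `W` is
`Λ = {P} ∪ {Q} ∪ O(γ) ∪ O(a)`. Consequently the only `f`-invariant ergodic Borel
probability measures giving full measure to `W` are `δ_P` and `δ_Q`; in particular no
measure `t δ_P + (1−t) δ_Q` with `t ∈ (0,1)` is a weak* limit of `f`-invariant ergodic
Borel probability measures giving full measure to `W`. -/
theorem nontwisted_cycle_maximal_invariant_set
    (n m : ℕ) (hn : 2 ≤ n) (hm : 2 ≤ m)
    (δ : ℝ) (hδ0 : 0 < δ) (hδ : δ ≤ ((4 : ℝ) ^ (n + m))⁻¹)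
    (Q : E3) (f : Equiv.Perm E3)
    (hfC : ContDiff ℝ 1 f) (hfinvC : ContDiff ℝ 1 f.symm)
    (hdisj : bigCube Ppt δ ∩ bigCube Q δ = ∅)
    (hdisjPQ : f '' bigCube Ppt δ ∩ bigCube Q δ = ∅)
    (hdisjQP : f '' bigCube Q δ ∩ bigCube Ppt δ = ∅)
    (hlocP : ∀ v ∈ bigCube Ppt δ, f v = (2 * v.1, v.2.1 / 4, 4 * v.2.2))
    (hlocQ : ∀ v ∈ bigCube Q δ,
      f v = (Q.1 + (v.1 - Q.1) / 2, Q.2.1 + (v.2.1 - Q.2.1) / 4, Q.2.2 + 4 * (v.2.2 - Q.2.2)))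
    (htransP : ∀ x ∈ Set.Icc (-δ) δ, ∀ y ∈ Set.Icc (-δ) δ, ∀ z ∈ Set.Icc (-δ) δ,
      (f ^ n) ((1 + x, y, z) : E3)
          = (Q.1 + (-1 + x), Q.2.1 + y / 4 ^ n, Q.2.2 + 4 ^ n * z) ∧
      ∀ i, 1 ≤ i → i < n →
        (f ^ i) ((1 + x, y, z) : E3) ∉ bigCube Ppt δ ∪ bigCube Q δ)
    (htransQ : ∀ x ∈ Set.Icc (-δ) δ, ∀ y ∈ Set.Icc (-δ) δ, ∀ z ∈ Set.Icc (-δ) δ,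
      (f ^ m) ((Q.1 + x, Q.2.1 + y, Q.2.2 + (-1 + z)) : E3)
          = ((1 : ℝ) * x, -1 + y / 4, 4 * z) ∧
      ∀ j, 1 ≤ j → j < m →
        (f ^ j) ((Q.1 + x, Q.2.1 + y, Q.2.2 + (-1 + z)) : E3) ∉
          bigCube Ppt δ ∪ bigCube Q δ) :
    maxInvSet f Q n m δ
        = {Ppt} ∪ {Q} ∪ fullOrbit f (gammaSeg δ) ∪ fullOrbit f {aPt Q} ∧
    (∀ μ : Measure E3, IsProbabilityMeasure μ → Ergodic (⇑f) μ →
      μ (cycleNbhd f Q n m δ) = 1 → μ = Measure.dirac Ppt ∨ μ = Measure.dirac Q) ∧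
    (∀ t ∈ Set.Ioo (0 : ℝ) 1,
      ¬ ∃ μseq : ℕ → Measure E3,
        (∀ k, IsProbabilityMeasure (μseq k) ∧ Ergodic (⇑f) (μseq k) ∧
          μseq k (cycleNbhd f Q n m δ) = 1) ∧
        (∀ g : E3 → ℝ, Continuous g → (∃ C, ∀ x, |g x| ≤ C) →
          Tendsto (fun k => ∫ x, g x ∂(μseq k)) atTop
            (nhds (t * g Ppt + (1 - t) * g Q)))) :=
  nontwisted_cycle_maximal_invariant_set_general n m hn δ hδ0 hδ Q f hdisj hdisjPQ hdisjQP hlocP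
    hlocQ htransP htransQ
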